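/- Let 0 < r0 < R ≤ ∞ and let φ : (r0,R) → [0,∞) satisfy limsup_{r→R⁻} φ(r) = +∞ and liminf_{r→R⁻} φ(r) = k with 0 ≤ k < ∞. Suppose there exists ψ ∈ D(r0,R) such that φ(r)ψ(r) is non-decreasing on (r0,R). Then for every M > k, the set H_M = {r ∈ (r0,R) : φ(r) > M} has upper ψ-density equal to 1 and lower ψ-density at most k/M. -/

import Mathlib

open MeasureTheory Filter Set
open scoped Topology

/-- The filter of real numbers tending to `R` from below (equals `atTop` when `R = ⊤`). -/
noncomputable def densFilter (R : EReal) : Filter ℝ :=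
  Filter.comap (fun x : ℝ => (x : EReal)) (nhdsWithin R (Set.Iio R))

/-- The interval `(r0, R)` as a set of reals. -/
def psiDomain (r0 : ℝ) (R : EReal) : Set ℝ := {r : ℝ | r0 < r ∧ (r : EReal) < R}

/-- Barry's class `𝒟(r0,R)`: positive, unbounded, differentiable, strictly increasing
functions on `(r0, R)`. -/
structure PsiClass (r0 : ℝ) (R : EReal) (ψ : ℝ → ℝ) : Prop where
  pos : ∀ r ∈ psiDomain r0 R, 0 < ψ r
  unbounded : Filter.Tendsto ψ (densFilter R) Filter.atTop
  differentiable : ∀ r ∈ psiDomain r0 R, DifferentiableAt ℝ ψ r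
  strictMono : StrictMonoOn ψ (psiDomain r0 R)

/-- The upper `ψ`-density of a set `E ⊆ (r0, R)`:
`limsup_{r→R⁻} (1/ψ(r)) ∫_{E∩[r0,r)} ψ'(t) dt`. -/
noncomputable def upperPsiDens (r0 : ℝ) (R : EReal) (ψ : ℝ → ℝ) (E : Set ℝ) : ℝ :=
  Filter.limsup (fun r => (∫ t in E ∩ Set.Ico r0 r, deriv ψ t) / ψ r) (densFilter R)

/-- The lower `ψ`-density of a set `E ⊆ (r0, R)`. -/
noncomputable def lowerPsiDens (r0 : ℝ) (R : EReal) (ψ : ℝ → ℝ) (E : Set ℝ) : ℝ :=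
  Filter.liminf (fun r => (∫ t in E ∩ Set.Ico r0 r, deriv ψ t) / ψ r) (densFilter R)

section Aux

variable {r0 : ℝ} {R : EReal} {ψ : ℝ → ℝ}

lemma eventually_densFilter {a : ℝ} (ha : (a : EReal) < R) :
    ∀ᶠ x in densFilter R, a < x ∧ (x : EReal) < R := by
  have h1 : Ioo (a : EReal) R ∈ 𝓝[<] R := Ioo_mem_nhdsLT_of_mem ⟨ha, le_rfl⟩
  have h2 : (fun x : ℝ => (x : EReal)) ⁻¹' Ioo (a : EReal) R ∈ densFilter R :=
    Filter.preimage_mem_comap h1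
  refine Filter.eventually_iff.2 ?_
  convert h2 using 1
  ext x
  simp only [Set.mem_setOf_eq, Set.mem_preimage, Set.mem_Ioo, EReal.coe_lt_coe_iff]

lemma densFilter_hasBasis (h : ∃ a : EReal, a < R) :
    (densFilter R).HasBasis (· < R) (fun a : EReal => (fun x : ℝ => (x : EReal)) ⁻¹' Ioo a R) :=
  (nhdsLT_basis_of_exists_lt h).comap _

lemma densFilter_neBot (h : ∃ a : EReal, a < R) : (densFilter R).NeBot := by
  refine (densFilter_hasBasis h).neBot_iff.2 ?_
  intro a ha
  obtain ⟨x, hx1, hx2⟩ := EReal.lt_iff_exists_real_btwn.1 ha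
  exact ⟨x, hx1, hx2⟩

lemma isOpen_psiDomain : IsOpen (psiDomain r0 R) := by
  have : psiDomain r0 R = Ioi r0 ∩ ((fun x : ℝ => (x : EReal)) ⁻¹' Iio R) := rfl
  rw [this]
  exact isOpen_Ioi.inter (isOpen_Iio.preimage continuous_coe_real_ereal)

lemma psiDomain_ordConn {s u t : ℝ} (hs : s ∈ psiDomain r0 R) (hu : u ∈ psiDomain r0 R)
    (ht : t ∈ Icc s u) : t ∈ psiDomain r0 R :=
  ⟨lt_of_lt_of_le hs.1 ht.1, lt_of_le_of_lt (EReal.coe_le_coe_iff.2 ht.2) hu.2⟩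

lemma Ioo_subset_psiDomain {b : ℝ} (hb : b ∈ psiDomain r0 R) :
    Ioo r0 b ⊆ psiDomain r0 R :=
  fun t ht => ⟨ht.1, lt_trans (EReal.coe_lt_coe_iff.2 ht.2) hb.2⟩

lemma PsiClass.deriv_nonneg (hψ : PsiClass r0 R ψ) {x : ℝ} (hx : x ∈ psiDomain r0 R) :
    0 ≤ deriv ψ x := by
  have hd := (hψ.differentiable x hx).hasDerivAt
  rw [hasDerivAt_iff_tendsto_slope] at hd
  have hd' : Tendsto (slope ψ x) (𝓝[>] x) (𝓝 (deriv ψ x)) :=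
    hd.mono_left (nhdsWithin_mono x (fun y hy => ne_of_gt hy))
  refine ge_of_tendsto hd' ?_
  have hev : ∀ᶠ y in 𝓝[>] x, y ∈ psiDomain r0 R :=
    eventually_nhdsWithin_of_eventually_nhds
      (Filter.eventually_iff.2 (isOpen_psiDomain.mem_nhds hx))
  filter_upwards [hev, self_mem_nhdsWithin] with y hy hxy
  rw [slope_def_field]
  have h1 : ψ x ≤ ψ y := (hψ.strictMono hx hy hxy).le
  exact div_nonneg (sub_nonneg.2 h1) (sub_nonneg.2 (le_of_lt hxy))

lemma PsiClass.contOn (hψ : PsiClass r0 R ψ) {s : Set ℝ} (hs : s ⊆ psiDomain r0 R) :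
    ContinuousOn ψ s :=
  fun x hx => ((hψ.differentiable x (hs hx)).continuousAt).continuousWithinAt

lemma PsiClass.ftc (hψ : PsiClass r0 R ψ) {s u : ℝ} (hs : s ∈ psiDomain r0 R)
    (hu : u ∈ psiDomain r0 R) (hsu : s ≤ u) :
    IntegrableOn (deriv ψ) (Ico s u) volume ∧
      ∫ t in Ico s u, deriv ψ t = ψ u - ψ s := by
  have hIcc : Icc s u ⊆ psiDomain r0 R := fun t ht => psiDomain_ordConn hs hu ht
  have hder : ∀ x ∈ Ioo s u, HasDerivAt ψ (deriv ψ x) x := fun x hx =>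
    (hψ.differentiable x (hIcc (Ioo_subset_Icc_self hx))).hasDerivAt
  have hpos : ∀ x ∈ Ioo s u, 0 ≤ deriv ψ x := fun x hx =>
    hψ.deriv_nonneg (hIcc (Ioo_subset_Icc_self hx))
  have hcont : ContinuousOn ψ (Icc s u) := hψ.contOn hIcc
  have hint : IntegrableOn (deriv ψ) (Ioc s u) volume :=
    intervalIntegral.integrableOn_deriv_of_nonneg hcont hder hpos
  have hIcoIoc : (volume : Measure ℝ).restrict (Ico s u) = volume.restrict (Ioc s u) :=
    Measure.restrict_congr_set Ico_ae_eq_Ioc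
  have hIco : IntegrableOn (deriv ψ) (Ico s u) volume := by
    rw [IntegrableOn, hIcoIoc]; exact hint
  refine ⟨hIco, ?_⟩
  have h1 : ∫ t in s..u, deriv ψ t = ψ u - ψ s := by
    apply intervalIntegral.integral_eq_sub_of_hasDerivAt
    · intro x hx
      rw [uIcc_of_le hsu] at hx
      exact (hψ.differentiable x (hIcc hx)).hasDerivAt
    · apply intervalIntegral.intervalIntegrable_deriv_of_nonneg
      · rwa [uIcc_of_le hsu]
      · rwa [min_eq_left hsu, max_eq_right hsu]
      · rwa [min_eq_left hsu, max_eq_right hsu]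
  rw [← h1, intervalIntegral.integral_of_le hsu]
  rw [show (∫ t in Ico s u, deriv ψ t) = ∫ t in Ioc s u, deriv ψ t by rw [setIntegral_congr_set Ico_ae_eq_Ioc]]

lemma PsiClass.lint_bound (hψ : PsiClass r0 R ψ) {b c : ℝ} (hb : b ∈ psiDomain r0 R)
    (hc : ∀ t ∈ Ioo r0 b, ψ t ≤ c) :
    ∫⁻ t in Ioo r0 b, ENNReal.ofReal (deriv ψ t) ≤ ENNReal.ofReal c := by
  have hd0 : (0 : ℝ) < b - r0 := sub_pos.2 hb.1
  set d := b - r0 with hd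
  set a : ℕ → ℝ := fun n => r0 + d / (n + 3) with ha
  set b' : ℕ → ℝ := fun n => b - d / (n + 3) with hb'
  have hden : ∀ n : ℕ, (0:ℝ) < (n:ℝ) + 3 := fun n => by positivity
  have hfrac_pos : ∀ n : ℕ, (0:ℝ) < d / (n + 3) := fun n => div_pos hd0 (hden n)
  have hfrac_anti : ∀ m n : ℕ, m ≤ n → d / (n + 3) ≤ d / (m + 3) := by
    intro m n hmn
    apply div_le_div_of_nonneg_left (le_of_lt hd0) (hden m)
    have : (m:ℝ) ≤ (n:ℝ) := Nat.cast_le.2 hmn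
    linarith
  have hab : ∀ n, a n < b' n := by
    intro n
    have h3 : (2:ℝ) < (n:ℝ) + 3 := by have : (0:ℝ) ≤ (n:ℝ) := Nat.cast_nonneg n; linarith
    have : 2 * (d / (n + 3)) < d := by
      rw [mul_div_assoc']
      rw [div_lt_iff₀ (hden n)]
      nlinarith [hd0]
    simp only [ha, hb']
    linarith
  have haIoo : ∀ n, a n ∈ Ioo r0 b := by
    intro n
    constructor
    · simp only [ha]; linarith [hfrac_pos n]
    · calc a n < b' n := hab n
        _ < b := by simp only [hb']; linarith [hfrac_pos n]
  have hbIoo : ∀ n, b' n ∈ Ioo r0 b := by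
    intro n
    refine ⟨lt_trans (haIoo n).1 (hab n), ?_⟩
    simp only [hb']; linarith [hfrac_pos n]
  have hmonoset : Monotone (fun n => Ico (a n) (b' n)) := by
    intro m n hmn
    apply Ico_subset_Ico
    · simp only [ha]; linarith [hfrac_anti m n hmn]
    · simp only [hb']; linarith [hfrac_anti m n hmn]
  have hunion : (⋃ n, Ico (a n) (b' n)) = Ioo r0 b := by
    apply Subset.antisymm
    · refine iUnion_subset fun n => ?_
      intro t ht
      exact ⟨lt_of_lt_of_le (haIoo n).1 ht.1, lt_of_lt_of_le ht.2 (le_of_lt (hbIoo n).2)⟩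
    · intro t ht
      obtain ⟨n, hn⟩ := exists_nat_gt (d / min (t - r0) (b - t))
      have hmin : 0 < min (t - r0) (b - t) := lt_min (sub_pos.2 ht.1) (sub_pos.2 ht.2)
      have hkey : d / ((n:ℝ) + 3) < min (t - r0) (b - t) := by
        rw [div_lt_iff₀ (hden n)]
        have h1 : d < (n:ℝ) * min (t - r0) (b - t) := (div_lt_iff₀ hmin).1 hn
        nlinarith [hmin]
      refine mem_iUnion.2 ⟨n, ?_, ?_⟩
      · simp only [ha]
        have h2 := min_le_left (t - r0) (b - t)
        linarith [lt_of_lt_of_le hkey h2]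
      · simp only [hb']
        have h2 := min_le_right (t - r0) (b - t)
        linarith [lt_of_lt_of_le hkey h2]
  set f : ℕ → ℝ → ENNReal := fun n => (Ico (a n) (b' n)).indicator
      (fun t => ENNReal.ofReal (deriv ψ t)) with hf
  have hmeasf : ∀ n, Measurable (f n) := fun n =>
    (ENNReal.measurable_ofReal.comp (measurable_deriv ψ)).indicator measurableSet_Ico
  have hmonof : Monotone f := by
    intro m n hmn
    exact indicator_le_indicator_of_subset (hmonoset hmn) (fun x => zero_le)
  have hsup : (fun x => ⨆ n, f n x) =
      (Ioo r0 b).indicator (fun t => ENNReal.ofReal (deriv ψ t)) := by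
    funext x
    by_cases hx : x ∈ Ioo r0 b
    · rw [indicator_of_mem hx]
      obtain ⟨n, hn⟩ := mem_iUnion.1 (hunion ▸ hx : x ∈ ⋃ n, Ico (a n) (b' n))
      apply le_antisymm
      · refine iSup_le fun m => ?_
        by_cases hm : x ∈ Ico (a m) (b' m)
        · rw [hf]; simp only [indicator_of_mem hm]; exact le_rfl
        · rw [hf]; simp only [indicator_of_notMem hm]; exact zero_le
      · refine le_iSup_of_le n ?_
        rw [hf]; simp only [indicator_of_mem hn]; exact le_rfl
    · rw [indicator_of_notMem hx]
      have : ∀ n, f n x = 0 := by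
        intro n
        rw [hf]
        refine indicator_of_notMem (fun hmem => hx ?_) _
        rw [← hunion]
        exact mem_iUnion.2 ⟨n, hmem⟩
      simp [this]
  have hlsup := lintegral_iSup (μ := volume) hmeasf hmonof
  rw [hsup] at hlsup
  rw [← lintegral_indicator measurableSet_Ioo, hlsup]
  refine iSup_le fun n => ?_
  have hintv : ∫⁻ x, f n x = ∫⁻ t in Ico (a n) (b' n), ENNReal.ofReal (deriv ψ t) := by
    rw [hf, lintegral_indicator measurableSet_Ico]
  rw [hintv]
  have haD : a n ∈ psiDomain r0 R := Ioo_subset_psiDomain hb (haIoo n)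
  have hbD : b' n ∈ psiDomain r0 R := Ioo_subset_psiDomain hb (hbIoo n)
  obtain ⟨hi, he⟩ := hψ.ftc haD hbD (le_of_lt (hab n))
  have hnn : 0 ≤ᵐ[volume.restrict (Ico (a n) (b' n))] deriv ψ := by
    refine (ae_restrict_iff' measurableSet_Ico).2 (ae_of_all _ fun t ht => ?_)
    exact hψ.deriv_nonneg (psiDomain_ordConn haD hbD ⟨ht.1, le_of_lt ht.2⟩)
  rw [← ofReal_integral_eq_lintegral_ofReal hi hnn, he]
  apply ENNReal.ofReal_le_ofReal
  have h1 : ψ (b' n) ≤ c := hc _ (hbIoo n)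
  have h2 : 0 < ψ (a n) := hψ.pos _ haD
  linarith

lemma PsiClass.integrableOn_Ioo (hψ : PsiClass r0 R ψ) {b : ℝ} (hb : b ∈ psiDomain r0 R) :
    IntegrableOn (deriv ψ) (Ioo r0 b) volume := by
  constructor
  · exact (measurable_deriv ψ).aestronglyMeasurable
  · rw [HasFiniteIntegral]
    have hcong : ∫⁻ t in Ioo r0 b, ‖deriv ψ t‖ₑ =
        ∫⁻ t in Ioo r0 b, ENNReal.ofReal (deriv ψ t) := by
      refine setLIntegral_congr_fun measurableSet_Ioo (fun t ht => ?_)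
      exact Real.enorm_eq_ofReal (hψ.deriv_nonneg (Ioo_subset_psiDomain hb ht))
    rw [hcong]
    have hmono : ∀ t ∈ Ioo r0 b, ψ t ≤ ψ b := fun t ht =>
      (hψ.strictMono (Ioo_subset_psiDomain hb ht) hb ht.2).le
    exact lt_of_le_of_lt (hψ.lint_bound hb hmono) ENNReal.ofReal_lt_top

lemma PsiClass.integral_bounds (hψ : PsiClass r0 R ψ) {r : ℝ} (hr : r ∈ psiDomain r0 R)
    {A : Set ℝ} (hA : A ⊆ Ioo r0 r) :
    0 ≤ ∫ t in A, deriv ψ t ∧ (∫ t in A, deriv ψ t) ≤ ψ r := by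
  have hnn : 0 ≤ᵐ[volume.restrict (Ioo r0 r)] deriv ψ :=
    (ae_restrict_iff' measurableSet_Ioo).2
      (ae_of_all _ fun t ht => hψ.deriv_nonneg (Ioo_subset_psiDomain hr ht))
  have hnnA : 0 ≤ᵐ[volume.restrict A] deriv ψ :=
    hnn.filter_mono (ae_mono (Measure.restrict_mono hA le_rfl))
  refine ⟨integral_nonneg_of_ae hnnA, ?_⟩
  calc (∫ t in A, deriv ψ t) ≤ ∫ t in Ioo r0 r, deriv ψ t :=
        integral_mono_measure (Measure.restrict_mono hA le_rfl) hnn (hψ.integrableOn_Ioo hr)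
    _ ≤ ψ r := by
        rw [integral_eq_lintegral_of_nonneg_ae hnn (measurable_deriv ψ).aestronglyMeasurable]
        have hmono : ∀ t ∈ Ioo r0 r, ψ t ≤ ψ r := fun t ht =>
          (hψ.strictMono (Ioo_subset_psiDomain hr ht) hr ht.2).le
        have hle := hψ.lint_bound hr hmono
        calc (∫⁻ t in Ioo r0 r, ENNReal.ofReal (deriv ψ t)).toReal
            ≤ (ENNReal.ofReal (ψ r)).toReal :=
              ENNReal.toReal_mono ENNReal.ofReal_ne_top hle
          _ = ψ r := ENNReal.toReal_ofReal (le_of_lt (hψ.pos r hr))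

end Aux

theorem statement6 (r0 : ℝ) (R : EReal) (hr0 : 0 < r0) (hr0R : (r0 : EReal) < R)
    (φ : ℝ → ℝ) (hφ : ∀ r ∈ psiDomain r0 R, 0 ≤ φ r)
    (k : ℝ) (hk0 : 0 ≤ k)
    (hK : Filter.limsup (fun r => ((φ r : ℝ) : EReal)) (densFilter R) = ⊤)
    (hk : Filter.liminf (fun r => ((φ r : ℝ) : EReal)) (densFilter R) = (k : EReal))
    (ψ : ℝ → ℝ) (hψ : PsiClass r0 R ψ)
    (hmono : MonotoneOn (fun r => φ r * ψ r) (psiDomain r0 R))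
    (M : ℝ) (hM : k < M) :
    upperPsiDens r0 R ψ {r | r ∈ psiDomain r0 R ∧ M < φ r} = 1 ∧
    lowerPsiDens r0 R ψ {r | r ∈ psiDomain r0 R ∧ M < φ r} ≤ k / M := by
  haveI hNB : (densFilter R).NeBot := densFilter_neBot ⟨r0, hr0R⟩
  set F := densFilter R with hF
  set E : Set ℝ := {r | r ∈ psiDomain r0 R ∧ M < φ r} with hE
  set g : ℝ → ℝ := fun r => (∫ t in E ∩ Set.Ico r0 r, deriv ψ t) / ψ r with hg
  have hM0 : 0 < M := lt_of_le_of_lt hk0 hM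
  have hEsub : ∀ {r : ℝ}, r ∈ psiDomain r0 R → E ∩ Set.Ico r0 r ⊆ Ioo r0 r := by
    intro r _ t ht
    exact ⟨ht.1.1.1, ht.2.2⟩
  have hevD : ∀ᶠ r in F, r ∈ psiDomain r0 R := by
    filter_upwards [eventually_densFilter hr0R] with x hx
    exact ⟨hx.1, hx.2⟩
  have hbounds : ∀ᶠ r in F, 0 ≤ g r ∧ g r ≤ 1 := by
    filter_upwards [hevD] with r hr
    have hpos := hψ.pos r hr
    obtain ⟨h0, h1⟩ := hψ.integral_bounds hr (hEsub hr)
    simp only [hg]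
    exact ⟨div_nonneg h0 hpos.le, (div_le_one hpos).2 h1⟩
  have hBle : F.IsBoundedUnder (· ≤ ·) g :=
    isBoundedUnder_of_eventually_le (hbounds.mono fun r h => h.2)
  have hBge : F.IsBoundedUnder (· ≥ ·) g :=
    isBoundedUnder_of_eventually_ge (hbounds.mono fun r h => h.1)
  have hup : upperPsiDens r0 R ψ E = Filter.limsup g F := rfl
  have hlow : lowerPsiDens r0 R ψ E = Filter.liminf g F := rfl
  constructor
  · -- upper density = 1
    rw [hup]
    have hle : Filter.limsup g F ≤ 1 :=
      limsup_le_of_le hBge.isCoboundedUnder_le (hbounds.mono fun r h => h.2)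
    have key1 : ∀ ε : ℝ, 0 < ε → ε < 1 → 1 - ε ≤ Filter.limsup g F := by
      intro ε hε hε1
      refine le_limsup_of_frequently_le ?_ hBle
      refine ((densFilter_hasBasis ⟨(r0 : EReal), hr0R⟩).frequently_iff).2 ?_
      intro a ha
      obtain ⟨a1, ha1, ha1R⟩ := EReal.lt_iff_exists_real_btwn.1 ha
      have ha2R : ((max a1 r0 : ℝ) : EReal) < R := by
        rcases le_total a1 r0 with h | h
        · rw [max_eq_right h]; exact hr0R
        · rw [max_eq_left h]; exact ha1R
      set C : ℝ := M * (1 + 1/ε) with hC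
      have hCpos : 0 < C := by positivity
      have hlt : (C : EReal) < Filter.limsup (fun r => ((φ r : ℝ) : EReal)) F := by
        rw [hF, hK]; exact EReal.coe_lt_top C
      have hfreqC : ∃ᶠ x in F, (C : EReal) < ((φ x : ℝ) : EReal) :=
        Filter.frequently_lt_of_lt_limsup (by isBoundedDefault) hlt
      obtain ⟨s, hCs, hs1, hs2⟩ :=
        (hfreqC.and_eventually (eventually_densFilter ha2R)).exists
      have hsD : s ∈ psiDomain r0 R := ⟨lt_of_le_of_lt (le_max_right a1 r0) hs1, hs2⟩
      have hCs' : C < φ s := EReal.coe_lt_coe_iff.1 hCs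
      have hψs : 0 < ψ s := hψ.pos s hsD
      set V : ℝ := ψ s / ε with hV
      have hψsV : ψ s < V := by
        rw [hV, lt_div_iff₀ hε]; nlinarith
      obtain ⟨s', hVs', hss', hs'R⟩ : ∃ s', V < ψ s' ∧ s < s' ∧ (s' : EReal) < R := by
        have h1 : ∀ᶠ x in F, V < ψ x := hψ.unbounded.eventually_gt_atTop V
        obtain ⟨x, hx1, hx2, hx3⟩ := (h1.and (eventually_densFilter hs2)).exists
        exact ⟨x, hx1, hx2, hx3⟩
      have hs'D : s' ∈ psiDomain r0 R := ⟨lt_trans hsD.1 hss', hs'R⟩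
      have hIccD : Icc s s' ⊆ psiDomain r0 R := fun t ht => psiDomain_ordConn hsD hs'D ht
      have hVmem : V ∈ Icc (ψ s) (ψ s') := ⟨hψsV.le, hVs'.le⟩
      obtain ⟨u, huIcc, hψu⟩ := intermediate_value_Icc hss'.le (hψ.contOn hIccD) hVmem
      have huD : u ∈ psiDomain r0 R := hIccD huIcc
      have hψupos : 0 < ψ u := hψ.pos u huD
      have hsu : s < u := by
        rcases lt_or_eq_of_le huIcc.1 with h | h
        · exact h
        · exfalso; rw [h, hψu] at hψsV; exact lt_irrefl _ hψsV
      have hsub2 : Ico s u ⊆ E := by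
        intro t ht
        have htD : t ∈ psiDomain r0 R := psiDomain_ordConn hsD huD ⟨ht.1, ht.2.le⟩
        have hψt : 0 < ψ t := hψ.pos t htD
        have h1 : φ s * ψ s ≤ φ t * ψ t := hmono hsD htD ht.1
        have h2 : C * ψ s ≤ φ s * ψ s := mul_le_mul_of_nonneg_right hCs'.le hψs.le
        have h3 : ψ t ≤ V := by
          rw [← hψu]
          exact (hψ.strictMono htD huD ht.2).le
        have e1 : M * V = M * ψ s / ε := by rw [hV]; ring
        have e2 : C * ψ s = M * ψ s + M * ψ s / ε := by
          rw [hC]; field_simp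
        have h4 : M * ψ t < C * ψ s := by
          have h5 : M * ψ t ≤ M * V := mul_le_mul_of_nonneg_left h3 hM0.le
          nlinarith [mul_pos hM0 hψs]
        have h5 : M * ψ t < φ t * ψ t := lt_of_lt_of_le h4 (le_trans h2 h1)
        exact ⟨htD, lt_of_mul_lt_mul_right h5 hψt.le⟩
      obtain ⟨hi, he⟩ := hψ.ftc hsD huD hsu.le
      have hbig : IntegrableOn (deriv ψ) (E ∩ Set.Ico r0 u) volume :=
        (hψ.integrableOn_Ioo huD).mono_set (hEsub huD)
      have hnnIoo : 0 ≤ᵐ[volume.restrict (Ioo r0 u)] deriv ψ :=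
        (ae_restrict_iff' measurableSet_Ioo).2
          (ae_of_all _ fun t ht => hψ.deriv_nonneg (Ioo_subset_psiDomain huD ht))
      have hnnbig : 0 ≤ᵐ[volume.restrict (E ∩ Set.Ico r0 u)] deriv ψ :=
        hnnIoo.filter_mono (ae_mono (Measure.restrict_mono (hEsub huD) le_rfl))
      have hsubIco : Ico s u ⊆ E ∩ Set.Ico r0 u := fun t ht =>
        ⟨hsub2 ht, ⟨le_of_lt (lt_of_lt_of_le hsD.1 ht.1), ht.2⟩⟩
      have hge : ψ u - ψ s ≤ ∫ t in E ∩ Set.Ico r0 u, deriv ψ t := by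
        rw [← he]
        exact setIntegral_mono_set hbig hnnbig (HasSubset.Subset.eventuallyLE hsubIco)
      have hεψ : ψ s = ε * ψ u := by
        rw [hψu, hV]; field_simp
      have hgu : 1 - ε ≤ g u := by
        simp only [hg]
        rw [le_div_iff₀ hψupos]
        have h7 : (1 - ε) * ψ u = ψ u - ψ s := by rw [hεψ]; ring
        linarith
      refine ⟨u, ?_, hgu⟩
      constructor
      · calc a < (a1 : EReal) := ha1
          _ ≤ ((max a1 r0 : ℝ) : EReal) := EReal.coe_le_coe_iff.2 (le_max_left a1 r0)
          _ < (u : EReal) := EReal.coe_lt_coe_iff.2 (lt_trans hs1 hsu)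
      · exact lt_of_le_of_lt (EReal.coe_le_coe_iff.2 huIcc.2) hs'R
    refine le_antisymm hle (le_of_forall_sub_le fun ε hε => ?_)
    rcases lt_or_ge ε 1 with h | h
    · exact key1 ε hε h
    · have := key1 (1/2) (by norm_num) (by norm_num)
      linarith
  · -- lower density ≤ k/M
    rw [hlow]
    have key2 : ∀ ε : ℝ, 0 < ε → Filter.liminf g F ≤ (k + ε) / M := by
      intro ε hε
      refine liminf_le_of_frequently_le ?_ hBge
      have hlt : Filter.liminf (fun r => ((φ r : ℝ) : EReal)) F < ((k + ε : ℝ) : EReal) := by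
        rw [hF, hk]; exact EReal.coe_lt_coe_iff.2 (by linarith)
      have hfq : ∃ᶠ r in F, ((φ r : ℝ) : EReal) < ((k + ε : ℝ) : EReal) :=
        Filter.frequently_lt_of_liminf_lt (by isBoundedDefault) hlt
      refine (hfq.and_eventually hevD).mono ?_
      rintro r ⟨hφr, hrD⟩
      have hφr' : φ r < k + ε := EReal.coe_lt_coe_iff.1 hφr
      have hψr : 0 < ψ r := hψ.pos r hrD
      have hkε : 0 < k + ε := by linarith
      have hSsub : E ∩ Set.Ico r0 r ⊆ Ioo r0 r := hEsub hrD
      set V : ℝ := ((k + ε) / M) * ψ r with hV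
      have hV0 : 0 ≤ V := by positivity
      have hSψ : ∀ t ∈ E ∩ Set.Ico r0 r, M * ψ t < (k + ε) * ψ r := by
        intro t ht
        have htD := ht.1.1
        have htr : t < r := ht.2.2
        have h1 : φ t * ψ t ≤ φ r * ψ r := hmono htD hrD htr.le
        have h2 : φ r * ψ r < (k + ε) * ψ r := mul_lt_mul_of_pos_right hφr' hψr
        have h3 : M * ψ t < φ t * ψ t := mul_lt_mul_of_pos_right ht.1.2 (hψ.pos t htD)
        linarith
      rcases Set.eq_empty_or_nonempty (E ∩ Set.Ico r0 r) with hSe | hSne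
      · simp only [hg]
        rw [hSe]
        simp only [Measure.restrict_empty, integral_zero_measure, zero_div]
        positivity
      · set w := sSup (E ∩ Set.Ico r0 r) with hw
        have hbdd : BddAbove (E ∩ Set.Ico r0 r) := ⟨r, fun t ht => (hSsub ht).2.le⟩
        obtain ⟨t0, ht0⟩ := hSne
        have hwr : w ≤ r := csSup_le ⟨t0, ht0⟩ fun t ht => (hSsub ht).2.le
        have hwD : w ∈ psiDomain r0 R :=
          ⟨lt_of_lt_of_le (hSsub ht0).1 (le_csSup hbdd ht0),
            lt_of_le_of_lt (EReal.coe_le_coe_iff.2 hwr) hrD.2⟩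
        have hIooV : ∀ t ∈ Ioo r0 w, ψ t ≤ V := by
          intro t ht
          obtain ⟨bb, hbbS, htbb⟩ := exists_lt_of_lt_csSup ⟨t0, ht0⟩ ht.2
          have hbbD : bb ∈ psiDomain r0 R := hbbS.1.1
          have htD : t ∈ psiDomain r0 R :=
            ⟨ht.1, lt_trans (EReal.coe_lt_coe_iff.2 htbb) hbbD.2⟩
          have h1 : ψ t < ψ bb := hψ.strictMono htD hbbD htbb
          have h2 : M * ψ bb < (k + ε) * ψ r := hSψ bb hbbS
          have h3 : ψ bb < V := by
            rw [hV, div_mul_eq_mul_div, lt_div_iff₀ hM0]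
            nlinarith
          linarith
        have hlint : ∫⁻ t in Ioo r0 w, ENNReal.ofReal (deriv ψ t) ≤ ENNReal.ofReal V :=
          hψ.lint_bound hwD hIooV
        have hrest : (volume : Measure ℝ).restrict (Ioc r0 w) = volume.restrict (Ioo r0 w) :=
          (Measure.restrict_congr_set Ioo_ae_eq_Ioc).symm
        have hiw : IntegrableOn (deriv ψ) (Ioc r0 w) volume := by
          rw [IntegrableOn, hrest]; exact hψ.integrableOn_Ioo hwD
        have hnnIoo : 0 ≤ᵐ[volume.restrict (Ioo r0 w)] deriv ψ :=
          (ae_restrict_iff' measurableSet_Ioo).2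
            (ae_of_all _ fun t ht => hψ.deriv_nonneg (Ioo_subset_psiDomain hwD ht))
        have hnnw : 0 ≤ᵐ[volume.restrict (Ioc r0 w)] deriv ψ := by
          rw [hrest]; exact hnnIoo
        have hSIoc : E ∩ Set.Ico r0 r ⊆ Ioc r0 w := fun t ht =>
          ⟨(hSsub ht).1, le_csSup hbdd ht⟩
        have hIle : (∫ t in E ∩ Set.Ico r0 r, deriv ψ t) ≤ ∫ t in Ioc r0 w, deriv ψ t :=
          setIntegral_mono_set hiw hnnw (HasSubset.Subset.eventuallyLE hSIoc)
        have hIle2 : (∫ t in Ioc r0 w, deriv ψ t) ≤ V := by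
          rw [show (∫ t in Ioc r0 w, deriv ψ t) = ∫ t in Ioo r0 w, deriv ψ t from
            (setIntegral_congr_set Ioo_ae_eq_Ioc).symm]
          rw [integral_eq_lintegral_of_nonneg_ae hnnIoo (measurable_deriv ψ).aestronglyMeasurable]
          calc (∫⁻ t in Ioo r0 w, ENNReal.ofReal (deriv ψ t)).toReal
              ≤ (ENNReal.ofReal V).toReal := ENNReal.toReal_mono ENNReal.ofReal_ne_top hlint
            _ = V := ENNReal.toReal_ofReal hV0
        simp only [hg]
        calc (∫ t in E ∩ Set.Ico r0 r, deriv ψ t) / ψ r ≤ V / ψ r := by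
              have h9 := mul_le_mul_of_nonneg_right (le_trans hIle hIle2)
                (inv_nonneg.2 hψr.le)
              simpa [div_eq_mul_inv] using h9
          _ = (k + ε) / M := by rw [hV]; field_simp
    refine le_of_forall_sub_le fun δ hδ => ?_
    have h1 := key2 (δ * M) (by positivity)
    have h2 : (k + δ * M) / M = k / M + δ := by field_simp
    linarith
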